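/- arXiv:2508.18511 — 3 statements merged into one kernel-verified Lean document; each statement's English description precedes it below -/
import Mathlib

section
/- Let (N,n) be a bad pair and suppose gcd(N, 2n+1) = 1. Then R_{N,n} = D((2n+1)/(2N), 1/(2N)), the closed disk of radius 1/(2N) centered at (2n+1)/(2N). In particular, c(N,n) = 0. -/
namespace Paper

noncomputable section

/-- Closed disk attached to a rational `α = a/b` in lowest terms:
center `α`, radius `1/b`. -/
def disk (α : ℚ) : Set ℂ := Metric.closedBall (α : ℂ) (1 / (α.den : ℝ))

/-- The closed disk `D_{a/b}` of radius `1/b` centered at `a/b`. -/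
def diskAt (a b : ℕ) : Set ℂ := Metric.closedBall ((a : ℂ) / (b : ℂ)) (1 / (b : ℝ))

/-- The north pole `P_α = a/b + i/b` of the disk of `α = a/b` in lowest terms. -/
def northPole (α : ℚ) : ℂ := (α : ℂ) + Complex.I / (α.den : ℂ)

/-- Complexity of the north pole of `α` relative to a set `S` of rationals:
the number of `β ∈ S`, `β ≠ α`, whose disk contains `P_α`. -/
def poleComplexity (S : Set ℚ) (α : ℚ) : ℕ :=
  {β ∈ S | β ≠ α ∧ northPole α ∈ disk β}.ncard

/-- Rationals `a/b ∈ [n/N, (n+1)/N]` in lowest terms with `N ∣ b`. -/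
def candB (N n : ℕ) : Set ℚ :=
  {α | (n : ℚ) / (N : ℚ) ≤ α ∧ α ≤ ((n : ℚ) + 1) / (N : ℚ) ∧ N ∣ α.den}

/-- The region `R_{N,n}` for a bad pair `(N,n)`. -/
def RB (N n : ℕ) : Set ℂ := ⋃ α ∈ candB N n, disk α

/-- The set `S_{N,n}` for a bad pair `(N,n)`. -/
def SB (N n : ℕ) : Set ℚ :=
  {α | α ∈ candB N n ∧ ¬ disk α ⊆ ⋃ β ∈ candB N n \ {α}, disk β}

/-- The complexity `c(N,n)` for a bad pair `(N,n)`. -/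
def cB (N n : ℕ) : ℕ := sSup (poleComplexity (SB N n) '' SB N n)

/-!
A candidate `α = a/(N t)` cannot sit at an endpoint of `[n/N, (n+1)/N]`: there `a = n t` or
`a = (n+1) t`, and `gcd(N, n) > 1` resp. `gcd(N, n+1) > 1` would divide both `a` and `N t`.
So `n t < a < (n+1) t`, i.e. `|2a - (2n+1) t| ≤ t - 2`, which says precisely that `D_α` lies in the
disk of radius `1/(2N)` about the midpoint `(2n+1)/(2N)`. When `gcd(N, 2n+1) = 1` that midpoint is
itself a candidate whose disk is this one, so it is the whole region and every other disk is
redundant.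
-/

lemma dist_ratCast_complex (p q : ℚ) : dist (p : ℂ) (q : ℂ) = dist p q := by
  rw [Complex.dist_eq, ← Complex.ofReal_ratCast, ← Complex.ofReal_ratCast, ← Complex.ofReal_sub,
    Complex.norm_real, Real.norm_eq_abs, Rat.dist_eq]

lemma disk_subset_disk {α β : ℚ} (h : 1 / (α.den : ℚ) + |α - β| ≤ 1 / β.den) :
    disk α ⊆ disk β := by
  refine Metric.closedBall_subset_closedBall' ?_
  rw [dist_ratCast_complex, Rat.dist_eq]
  have := (Rat.cast_le (K := ℝ)).mpr h
  push_cast at this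
  exact this

lemma den_natCast_div_of_coprime {a b : ℕ} (hb : 0 < b) (h : a.Coprime b) :
    ((a : ℚ) / b).den = b := by
  simpa using Rat.den_div_eq_of_coprime (a := a) (b := b) (by exact_mod_cast hb) (by simpa using h)

lemma disk_natCast_div_of_coprime {a b : ℕ} (hb : 0 < b) (h : a.Coprime b) :
    disk ((a : ℚ) / b) = diskAt a b := by
  simp [disk, diskAt, den_natCast_div_of_coprime hb h]

lemma num_ne_of_one_lt_gcd {α : ℚ} {N m t : ℕ} (hden : α.den = N * t) (hg : 1 < N.gcd m) :
    α.num ≠ m * t := by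
  intro hnum
  have hdvd_num : N.gcd m ∣ α.num.natAbs := by
    rw [hnum, Int.natAbs_mul, Int.natAbs_natCast, Int.natAbs_natCast]
    exact (Nat.gcd_dvd_right N m).mul_right t
  have hdvd_den : N.gcd m ∣ α.den := hden ▸ (Nat.gcd_dvd_left N m).mul_right t
  have := Nat.eq_one_of_dvd_coprimes α.reduced hdvd_num hdvd_den
  omega

lemma abs_two_mul_sub_add_two_le {a n t : ℤ} (h₁ : n * t < a) (h₂ : a < (n + 1) * t) :
    |2 * a - (2 * n + 1) * t| + 2 ≤ t := by
  rw [← le_sub_iff_add_le, abs_le]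
  constructor <;> linarith

section candidates

variable {N n : ℕ} {α : ℚ}

lemma num_bounds_of_mem_candB (hN : 0 < N) (hα : α ∈ candB N n) {t : ℕ} (hden : α.den = N * t) :
    (n : ℤ) * t ≤ α.num ∧ α.num ≤ ((n : ℤ) + 1) * t := by
  obtain ⟨hlo, hhi, -⟩ := hα
  have hNq : (0 : ℚ) < N := by exact_mod_cast hN
  have hnum : (α.num : ℚ) = α * N * t := by
    rw [← Rat.mul_den_eq_num, hden]; push_cast; ring
  rw [div_le_iff₀ hNq] at hlo
  rw [le_div_iff₀ hNq] at hhi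
  constructor
  · exact_mod_cast (hnum ▸ mul_le_mul_of_nonneg_right hlo t.cast_nonneg : (n : ℚ) * t ≤ α.num)
  · exact_mod_cast
      (hnum ▸ mul_le_mul_of_nonneg_right hhi t.cast_nonneg : α.num ≤ ((n : ℚ) + 1) * t)

lemma one_div_den_add_abs_sub_midpoint_le (hN : 0 < N) (hg : 1 < N.gcd n)
    (hbad : 1 < N.gcd (n + 1)) (hα : α ∈ candB N n) :
    1 / (α.den : ℚ) + |α - (2 * n + 1) / (2 * N)| ≤ 1 / (2 * N) := by
  obtain ⟨t, hden⟩ := hα.2.2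
  have ht : 0 < t := Nat.pos_of_mul_pos_left (hden ▸ α.den_pos)
  obtain ⟨hlo, hhi⟩ := num_bounds_of_mem_candB hN hα hden
  have hlo' : (n : ℤ) * t < α.num := hlo.lt_of_ne (num_ne_of_one_lt_gcd hden hg).symm
  have hhi' : α.num < ((n : ℤ) + 1) * t :=
    hhi.lt_of_ne (by exact_mod_cast num_ne_of_one_lt_gcd hden hbad)
  have hNt : (0 : ℚ) < 2 * N * t := by positivity
  have hsub :
      α - (2 * n + 1) / (2 * N) = ((2 * α.num - (2 * n + 1) * t : ℤ) : ℚ) / (2 * N * t) := by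
    conv_lhs => rw [← Rat.num_div_den α, hden]
    field_simp
    push_cast
    ring
  calc 1 / (α.den : ℚ) + |α - (2 * n + 1) / (2 * N)|
      = ((|2 * α.num - (2 * n + 1) * t| + 2 : ℤ) : ℚ) / (2 * N * t) := by
        rw [hsub, abs_div, abs_of_pos hNt, hden]
        field_simp
        push_cast
        ring
    _ ≤ t / (2 * N * t) := by
        gcongr
        exact_mod_cast abs_two_mul_sub_add_two_le hlo' hhi'
    _ = 1 / (2 * N) := by field_simp

lemma SB_subset_singleton {μ : ℚ} (hμ : μ ∈ candB N n) (h : ∀ α ∈ candB N n, disk α ⊆ disk μ) :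
    SB N n ⊆ {μ} := by
  intro α ⟨hα, hnot⟩
  by_contra hne
  exact hnot ((h α hα).trans (Set.subset_biUnion_of_mem ⟨hμ, Ne.symm hne⟩))

lemma cB_eq_zero_of_SB_subset_singleton {μ : ℚ} (h : SB N n ⊆ {μ}) : cB N n = 0 := by
  rcases Set.subset_singleton_iff_eq.mp h with h | h
  · simp [cB, h]
  · have : poleComplexity {μ} μ = 0 := by
      rw [poleComplexity, ← Set.ncard_empty ℚ]
      congr 1
      ext β
      simp +contextual
    simp [cB, h, this]

end candidates

theorem bad_region_midpoint_general (N n : ℕ) (hN : 1 < N)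
    (hg : 1 < Nat.gcd N n) (hbad : 1 < Nat.gcd N (n + 1))
    (hmid : Nat.gcd N (2 * n + 1) = 1) :
    RB N n = diskAt (2 * n + 1) (2 * N) ∧ cB N n = 0 := by
  have hN0 : 0 < N := by omega
  have hcop : (2 * n + 1).Coprime (2 * N) :=
    Nat.Coprime.mul_right (by simp [Nat.coprime_two_right]) (Nat.coprime_comm.mp hmid)
  have h2N : 0 < 2 * N := by omega
  have hμ : ((2 * n + 1 : ℕ) : ℚ) / (2 * N : ℕ) = (2 * n + 1) / (2 * N) := by push_cast; rfl
  set μ : ℚ := (2 * n + 1) / (2 * N)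
  have hμden : μ.den = 2 * N := hμ ▸ den_natCast_div_of_coprime h2N hcop
  have hμmem : μ ∈ candB N n := by
    refine ⟨?_, ?_, hμden ▸ dvd_mul_left N 2⟩ <;>
    · rw [div_le_div_iff₀ (by positivity) (by positivity)]; nlinarith
  have hsub : ∀ α ∈ candB N n, disk α ⊆ disk μ := fun α hα ↦ disk_subset_disk <| by
    rw [hμden]
    push_cast
    exact one_div_den_add_abs_sub_midpoint_le hN0 hg hbad hα
  have hRB : RB N n = disk μ :=
    (Set.iUnion₂_subset hsub).antisymm (Set.subset_biUnion_of_mem hμmem)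
  exact ⟨hRB.trans (hμ ▸ disk_natCast_div_of_coprime h2N hcop),
    cB_eq_zero_of_SB_subset_singleton (SB_subset_singleton hμmem hsub)⟩

/-- For a bad pair `(N,n)` with `gcd(N, 2n+1) = 1`, the region `R_{N,n}` is the
single disk of radius `1/(2N)` centered at `(2n+1)/(2N)`. In particular `c(N,n) = 0`. -/
theorem bad_region_midpoint (N n : ℕ) (hN : 1 < N) (hn : n ≤ N - 1)
    (hg : 1 < Nat.gcd N n) (hbad : 1 < Nat.gcd N (n + 1))
    (hmid : Nat.gcd N (2 * n + 1) = 1) :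
    RB N n = diskAt (2 * n + 1) (2 * N) ∧ cB N n = 0 :=
  bad_region_midpoint_general N n hN hg hbad hmid

end

end Paper
end

section
/- Let N>1 be an integer. If for every integer n with 0 ≤ n ≤ N−1 at least three of the seven integers n, n+1, 2n+1, 3n+1, 3n+2, 4n+1, 4n+3 are coprime to N, then c(N) = 0. -/
namespace Paper

noncomputable section

/-- Rationals `a/b ∈ [0,1]` in lowest terms with `N ∣ b`. -/
def cand (N : ℕ) : Set ℚ := {α | 0 ≤ α ∧ α ≤ 1 ∧ N ∣ α.den}

/-- The region `R_N`. -/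
def RN (N : ℕ) : Set ℂ := ⋃ α ∈ cand N, disk α

/-- The set `S_N`: those `α` whose disk is not covered by the other disks. -/
def SSet (N : ℕ) : Set ℚ :=
  {α | α ∈ cand N ∧ ¬ disk α ⊆ ⋃ β ∈ cand N \ {α}, disk β}

/-- The complexity `c(N)`: the maximum of the complexities of north poles of `α ∈ S_N`. -/
def cN (N : ℕ) : ℕ := sSup (poleComplexity (SSet N) '' SSet N)

/-!
For `α = a / b` and `β = c / d` everything is governed by `δ = a d - c b`: `D_α ⊆ D_β` as soon as
`|δ| ≤ b - d`, and `P_α ∈ D_β` iff `δ² + d² ≤ b²`.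

Every `α ∈ S_N` has denominator `p N` with `p ≤ 4`. Otherwise write `α = (n + j / m) / N` with
`m ≥ 5`; the coprimality hypothesis at `n` provides a candidate `(n + i / d) / N`, with `(d, i)` one of
`(1,0), (1,1), (2,1), (3,1), (3,2), (4,1), (4,3)`, whose disk contains `D_α`, or, when
`j / m ∈ {2/5, 3/5, 3/7, 4/7}`, two candidates on either side of `α` whose disks both contain `P_α`
and hence together cover `D_α`.

For denominators `p N` and `q N` with `p, q ≤ 4` one has `δ = N e`, and `P_α ∈ D_β` with
`D_α ⊄ D_β` means `e² + q² ≤ p²` and `|e| > p - q`. The only solutions are excluded by parity,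
since a rational with even denominator has odd numerator.
-/

lemma mem_disk_iff {z : ℂ} {β : ℚ} :
    z ∈ disk β ↔ (z.re - β) ^ 2 + z.im ^ 2 ≤ (1 / (β.den : ℝ)) ^ 2 := by
  rw [disk, Metric.mem_closedBall, Complex.dist_eq_re_im, Real.sqrt_le_left (by positivity)]
  simp

lemma northPole_mem_disk_iff_real {α β : ℚ} :
    northPole α ∈ disk β ↔ ((α : ℝ) - β) ^ 2 + (1 / (α.den : ℝ)) ^ 2 ≤ (1 / (β.den : ℝ)) ^ 2 := by
  rw [mem_disk_iff]
  simp [northPole, Complex.div_re, Complex.div_im, Complex.normSq_apply]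

lemma disk_subset_union_of_northPole_mem {α β γ : ℚ} (hβα : β ≤ α) (hαγ : α ≤ γ)
    (hβ : northPole α ∈ disk β) (hγ : northPole α ∈ disk γ) : disk α ⊆ disk β ∪ disk γ := by
  intro z hz
  rw [northPole_mem_disk_iff_real] at hβ hγ
  rw [mem_disk_iff] at hz
  rw [Set.mem_union, mem_disk_iff, mem_disk_iff]
  have hβα' : (β : ℝ) ≤ α := by exact_mod_cast hβα
  have hαγ' : (α : ℝ) ≤ γ := by exact_mod_cast hαγ
  -- `(x - β) ^ 2 ≤ (x - α) ^ 2 + (α - β) ^ 2` whenever `x ≤ α` and `β ≤ α`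
  rcases le_total z.re α with hzα | hαz
  · left
    nlinarith [mul_nonneg (sub_nonneg.2 hzα) (sub_nonneg.2 hβα')]
  · right
    nlinarith [mul_nonneg (sub_nonneg.2 hαz) (sub_nonneg.2 hαγ')]

section ScaledDenominators

variable {α β : ℚ} {N m d : ℕ}

lemma sub_mul_eq_of_den_eq_mul (hα : α.den = m * N) (hβ : β.den = d * N) :
    (α - β) * (m * d * N) = α.num * d - β.num * m := by
  have hα' := Rat.mul_den_eq_num α
  have hβ' := Rat.mul_den_eq_num β
  rw [hα] at hα'
  rw [hβ] at hβ'
  push_cast at hα' hβ' ⊢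
  linear_combination (d : ℚ) * hα' - (m : ℚ) * hβ'

lemma pos_of_den_eq_mul (hα : α.den = m * N) : 0 < m ∧ 0 < N := by
  have := α.den_pos
  rw [hα] at this
  exact ⟨Nat.pos_of_mul_pos_right this, Nat.pos_of_mul_pos_left this⟩

lemma disk_subset_disk_of_abs_le (hα : α.den = m * N) (hβ : β.den = d * N)
    (h : |α.num * d - β.num * m| ≤ (m : ℤ) - d) : disk α ⊆ disk β := by
  obtain ⟨hm, hN⟩ := pos_of_den_eq_mul hα
  obtain ⟨hd, -⟩ := pos_of_den_eq_mul hβ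
  apply Metric.closedBall_subset_closedBall'
  have hq : 1 / (α.den : ℚ) + |α - β| ≤ 1 / β.den := by
    have hmdN : (0 : ℚ) < m * d * N := by positivity
    have habs : |α - β| * (m * d * N) ≤ m - d := by
      rw [← abs_of_pos hmdN, ← abs_mul, sub_mul_eq_of_den_eq_mul hα hβ]
      exact_mod_cast h
    rw [hα, hβ]
    push_cast
    rw [div_add' _ _ _ (by positivity), div_le_div_iff₀ (by positivity) (by positivity)]
    nlinarith
  rw [Complex.dist_eq, ← Rat.cast_sub, Complex.norm_ratCast]
  have hq' := (Rat.cast_le (K := ℝ)).mpr hq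
  push_cast at hq' ⊢
  exact hq'

lemma northPole_mem_disk_iff (hα : α.den = m * N) (hβ : β.den = d * N) :
    northPole α ∈ disk β ↔ (α.num * d - β.num * m) ^ 2 + (d : ℤ) ^ 2 ≤ (m : ℤ) ^ 2 := by
  obtain ⟨hm, hN⟩ := pos_of_den_eq_mul hα
  obtain ⟨hd, -⟩ := pos_of_den_eq_mul hβ
  have hmdN : (0 : ℚ) < (m * d * N) ^ 2 := by positivity
  calc northPole α ∈ disk β
      ↔ (α - β) ^ 2 + (1 / (m * N : ℚ)) ^ 2 ≤ (1 / (d * N : ℚ)) ^ 2 := by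
        rw [northPole_mem_disk_iff_real, hα, hβ, ← Rat.cast_le (K := ℝ)]
        push_cast
        rfl
    _ ↔ ((α - β) * (m * d * N)) ^ 2 + (d : ℚ) ^ 2 ≤ (m : ℚ) ^ 2 := by
        rw [← mul_le_mul_iff_of_pos_right hmdN]
        constructor <;> intro h <;> field_simp at h ⊢ <;> linarith
    _ ↔ _ := by
        rw [sub_mul_eq_of_den_eq_mul hα hβ]
        exact_mod_cast Iff.rfl

end ScaledDenominators

lemma odd_num_of_two_dvd_den {γ : ℚ} (h : 2 ∣ γ.den) : Odd γ.num := by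
  rw [← Int.not_even_iff_odd, even_iff_two_dvd]
  intro hnum
  have h2 : 2 ∣ γ.num.natAbs := Int.ofNat_dvd_left.mp hnum
  exact absurd (Nat.eq_one_of_dvd_coprimes γ.reduced h2 h) (by norm_num)

lemma even_mul_sub_mul_add_add {a b : ℤ} {p q : ℤ} (ha : 2 ∣ p → Odd a) (hb : 2 ∣ q → Odd b)
    (hpq : 2 ∣ p ∨ 2 ∣ q) : Even (a * q - b * p + p + q) := by
  rcases hpq with ⟨t, rfl⟩ | ⟨t, rfl⟩
  · obtain ⟨s, rfl⟩ := ha ⟨t, rfl⟩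
    exact ⟨s * q - b * t + t + q, by ring⟩
  · obtain ⟨s, rfl⟩ := hb ⟨t, rfl⟩
    exact ⟨a * t - s * p + t, by ring⟩

-- Without the parity condition `(p, q, |e|) = (3, 2, 2), (4, 3, 2), (4, 2, 3)` would be exceptions.
lemma abs_le_sub_of_sq_add_sq_le {e : ℤ} {p q : ℕ} (hp : p ≤ 4) (hsq : e ^ 2 + q ^ 2 ≤ p ^ 2)
    (hpar : 2 ∣ (p : ℤ) ∨ 2 ∣ (q : ℤ) → Even (e + p + q)) : |e| ≤ p - q := by
  have hq : q ≤ 4 := by nlinarith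
  have he : -4 ≤ e ∧ e ≤ 4 := by constructor <;> nlinarith
  rw [abs_le]
  simp only [Int.even_iff] at hpar
  interval_cases p <;> interval_cases q <;> obtain ⟨he1, he2⟩ := he <;> interval_cases e <;> omega

lemma northPole_notMem_disk {N p q : ℕ} {α β : ℚ} (hα : α ∈ SSet N) (hβ : β ∈ cand N)
    (hne : β ≠ α) (hαp : α.den = p * N) (hp : p ≤ 4) (hβq : β.den = q * N) :
    northPole α ∉ disk β := by
  intro hpole
  rw [northPole_mem_disk_iff hαp hβq] at hpole
  have hnot : ¬ |α.num * q - β.num * p| ≤ (p : ℤ) - q := fun hle =>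
    hα.2 ((disk_subset_disk_of_abs_le hαp hβq hle).trans (Set.subset_biUnion_of_mem ⟨hβ, hne⟩))
  refine hnot (abs_le_sub_of_sq_add_sq_le hp hpole fun hpq => ?_)
  refine even_mul_sub_mul_add_add (fun h2 => odd_num_of_two_dvd_den ?_)
    (fun h2 => odd_num_of_two_dvd_den ?_) hpq
  · rw [hαp]
    exact Dvd.dvd.mul_right (Int.ofNat_dvd.mp h2) N
  · rw [hβq]
    exact Dvd.dvd.mul_right (Int.ofNat_dvd.mp h2) N

lemma notMem_SSet_of_disk_subset_union {N : ℕ} {α β γ : ℚ} (hβ : β ∈ cand N) (hγ : γ ∈ cand N)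
    (hβα : β ≠ α) (hγα : γ ≠ α) (h : disk α ⊆ disk β ∪ disk γ) : α ∉ SSet N := fun hα =>
  hα.2 (h.trans (Set.union_subset (Set.subset_biUnion_of_mem ⟨hβ, hβα⟩)
    (Set.subset_biUnion_of_mem ⟨hγ, hγα⟩)))

lemma exists_mem_cand_num_den {N n d i : ℕ} (hd : 0 < d) (hn : n < N) (hi : i ≤ d)
    (hcop : Nat.Coprime (d * n + i) (d * N)) :
    ∃ β ∈ cand N, β.num = d * n + i ∧ β.den = d * N := by
  have hdN : (0 : ℤ) < (d * N : ℕ) := by exact_mod_cast Nat.mul_pos hd (by omega)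
  have hcop' : ((d * n + i : ℕ) : ℤ).natAbs.Coprime ((d * N : ℕ) : ℤ).natAbs := by
    rwa [Int.natAbs_natCast, Int.natAbs_natCast]
  have hnum := Rat.num_div_eq_of_coprime hdN hcop'
  have hden := Rat.den_div_eq_of_coprime hdN hcop'
  set β : ℚ := ((d * n + i : ℕ) : ℤ) / ((d * N : ℕ) : ℤ)
  have hden' : β.den = d * N := by exact_mod_cast hden
  refine ⟨β, ⟨by positivity, ?_, ⟨d, by rw [hden', mul_comm]⟩⟩, by rw [hnum]; push_cast; ring, hden'⟩
  rw [← Rat.num_le_denom_iff, hnum, hden']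
  have : d * n + i ≤ d * N := by nlinarith
  exact_mod_cast this

lemma three_coprime_cases {N n : ℕ}
    (h : 3 ≤ (([n, n + 1, 2 * n + 1, 3 * n + 1, 3 * n + 2, 4 * n + 1, 4 * n + 3].filter
        (fun m => Nat.gcd N m = 1)).length)) :
    Nat.gcd N n = 1 ∨ Nat.gcd N (n + 1) = 1 ∨ Nat.gcd N (2 * n + 1) = 1 ∨
    (Nat.gcd N (3 * n + 1) = 1 ∧ Nat.gcd N (3 * n + 2) = 1) ∨
    (Nat.gcd N (3 * n + 1) = 1 ∧ Nat.gcd N (4 * n + 1) = 1 ∧ Nat.gcd N (4 * n + 3) = 1) ∨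
    (Nat.gcd N (3 * n + 2) = 1 ∧ Nat.gcd N (4 * n + 1) = 1 ∧ Nat.gcd N (4 * n + 3) = 1) := by
  by_cases h1 : Nat.gcd N n = 1
  · exact Or.inl h1
  by_cases h2 : Nat.gcd N (n + 1) = 1
  · exact Or.inr (Or.inl h2)
  by_cases h3 : Nat.gcd N (2 * n + 1) = 1
  · exact Or.inr (Or.inr (Or.inl h3))
  by_cases h4 : Nat.gcd N (3 * n + 1) = 1 <;> by_cases h5 : Nat.gcd N (3 * n + 2) = 1 <;>
  by_cases h6 : Nat.gcd N (4 * n + 1) = 1 <;> by_cases h7 : Nat.gcd N (4 * n + 3) = 1 <;>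
  simp [List.filter, h1, h2, h3, h4, h5, h6, h7] at h ⊢

lemma exists_num_eq_mul_add {N m : ℕ} {α : ℚ} (hα : α ∈ cand N) (hden : α.den = m * N)
    (hm : 2 ≤ m) : ∃ n j : ℕ, α.num = m * n + j ∧ n < N ∧ 0 < j ∧ j < m ∧ Nat.Coprime j m := by
  obtain ⟨a, ha⟩ : ∃ a : ℕ, α.num = a :=
    ⟨α.num.toNat, (Int.toNat_of_nonneg (Rat.num_nonneg.mpr hα.1)).symm⟩
  have hcop : Nat.Coprime a m := by
    have := α.reduced
    rw [ha, Int.natAbs_natCast, hden] at this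
    exact this.coprime_mul_right_right
  have hj : Nat.Coprime (a % m) m := by
    rw [Nat.Coprime, ← Nat.gcd_rec]
    exact hcop.symm
  have hj0 : 0 < a % m := by
    by_contra! h0
    rw [Nat.le_zero.mp h0, Nat.coprime_zero_left] at hj
    omega
  have ha_le : a ≤ m * N := by
    have := Rat.num_le_denom_iff.mpr hα.2.1
    rw [ha, hden] at this
    exact_mod_cast this
  refine ⟨a / m, a % m, by rw [ha]; exact_mod_cast (Nat.div_add_mod a m).symm, ?_, hj0,
    Nat.mod_lt _ (by omega), hj⟩
  by_contra! hN
  have := Nat.div_add_mod a m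
  have := Nat.mul_le_mul_left m hN
  omega

section LocalCoordinates

variable {N m n j : ℕ} {α : ℚ} (hden : α.den = m * N) (hnum : α.num = m * n + j) (hn : n < N)
include hden hnum hn

lemma exists_neighbour {d i : ℕ} (hd : 0 < d) (hdm : d < m) (hi : i ≤ d) (hid : Nat.Coprime i d)
    (hgcd : Nat.gcd N (d * n + i) = 1) :
    ∃ β ∈ cand N, β ≠ α ∧ α.num * d - β.num * m = (d : ℤ) * j - i * m ∧ β.den = d * N := by
  have hcop : Nat.Coprime (d * n + i) (d * N) :=
    Nat.Coprime.mul_right ((Nat.coprime_mul_left_add_left i d n).mpr hid) (Nat.coprime_comm.mp hgcd)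
  obtain ⟨β, hβ, hβnum, hβden⟩ := exists_mem_cand_num_den hd hn hi hcop
  refine ⟨β, hβ, fun hβα => ?_, by rw [hβnum, hnum]; ring, hβden⟩
  have hN := (pos_of_den_eq_mul hden).2
  rw [hβα, hden] at hβden
  exact hdm.ne (Nat.eq_of_mul_eq_mul_right hN hβden).symm

lemma notMem_SSet_of_disk_subset_disk {d i : ℕ} (hd : 0 < d) (hdm : d < m) (hi : i ≤ d)
    (hid : Nat.Coprime i d) (hgcd : Nat.gcd N (d * n + i) = 1)
    (hcov : |(d : ℤ) * j - i * m| ≤ m - d) : α ∉ SSet N := by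
  obtain ⟨β, hβ, hβα, hδ, hβden⟩ := exists_neighbour hden hnum hn hd hdm hi hid hgcd
  refine notMem_SSet_of_disk_subset_union hβ hβ hβα hβα ?_
  rw [Set.union_self]
  exact disk_subset_disk_of_abs_le hden hβden (by rwa [hδ])

lemma notMem_SSet_of_disk_subset_union_disk {d i d' i' : ℕ}
    (hd : 0 < d) (hdm : d < m) (hi : i ≤ d) (hid : Nat.Coprime i d)
    (hgcd : Nat.gcd N (d * n + i) = 1)
    (hd' : 0 < d') (hdm' : d' < m) (hi' : i' ≤ d') (hid' : Nat.Coprime i' d')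
    (hgcd' : Nat.gcd N (d' * n + i') = 1)
    (hle : i * m ≤ d * j) (hle' : d' * j ≤ i' * m)
    (hpole : ((d : ℤ) * j - i * m) ^ 2 + (d : ℤ) ^ 2 ≤ (m : ℤ) ^ 2)
    (hpole' : ((d' : ℤ) * j - i' * m) ^ 2 + (d' : ℤ) ^ 2 ≤ (m : ℤ) ^ 2) : α ∉ SSet N := by
  obtain ⟨β, hβ, hβα, hδ, hβden⟩ := exists_neighbour hden hnum hn hd hdm hi hid hgcd
  obtain ⟨γ, hγ, hγα, hδ', hγden⟩ := exists_neighbour hden hnum hn hd' hdm' hi' hid' hgcd'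
  refine notMem_SSet_of_disk_subset_union hβ hγ hβα hγα
    (disk_subset_union_of_northPole_mem ?_ ?_ ((northPole_mem_disk_iff hden hβden).mpr ?_)
      ((northPole_mem_disk_iff hden hγden).mpr ?_))
  · rw [Rat.le_iff, hβden, hden]
    have : (i : ℤ) * m ≤ d * j := by exact_mod_cast hle
    push_cast
    nlinarith
  · rw [Rat.le_iff, hγden, hden]
    have : (d' : ℤ) * j ≤ i' * m := by exact_mod_cast hle'
    push_cast
    nlinarith
  · rwa [hδ]
  · rwa [hδ']

lemma notMem_SSet_of_five_le (hm : 5 ≤ m) (hj0 : 0 < j) (hjm : j < m) (hjcop : Nat.Coprime j m)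
    (h : 3 ≤ (([n, n + 1, 2 * n + 1, 3 * n + 1, 3 * n + 2, 4 * n + 1, 4 * n + 3].filter
        (fun k => Nat.gcd N k = 1)).length)) : α ∉ SSet N := by
  intro hα
  have cover (d i : ℕ) (hdi : 0 < d ∧ d ≤ 4 ∧ i ≤ d ∧ Nat.Coprime i d)
      (hgcd : Nat.gcd N (d * n + i) = 1)
      (h₁ : (d : ℤ) * j - i * m ≤ m - d) (h₂ : (i : ℤ) * m - d * j ≤ m - d) : False :=
    notMem_SSet_of_disk_subset_disk hden hnum hn hdi.1 (by omega) hdi.2.2.1 hdi.2.2.2 hgcd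
      (abs_le.mpr ⟨by linarith, h₁⟩) hα
  have cover₂ (d i d' i' : ℕ) (hdi : 0 < d ∧ d ≤ 4 ∧ i ≤ d ∧ Nat.Coprime i d)
      (hdi' : 0 < d' ∧ d' ≤ 4 ∧ i' ≤ d' ∧ Nat.Coprime i' d')
      (hgcd : Nat.gcd N (d * n + i) = 1) (hgcd' : Nat.gcd N (d' * n + i') = 1)
      (hle : i * m ≤ d * j) (hle' : d' * j ≤ i' * m)
      (hpole : ((d : ℤ) * j - i * m) ^ 2 + (d : ℤ) ^ 2 ≤ (m : ℤ) ^ 2)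
      (hpole' : ((d' : ℤ) * j - i' * m) ^ 2 + (d' : ℤ) ^ 2 ≤ (m : ℤ) ^ 2) : False :=
    notMem_SSet_of_disk_subset_union_disk hden hnum hn hdi.1 (by omega) hdi.2.2.1 hdi.2.2.2 hgcd
      hdi'.1 (by omega) hdi'.2.2.1 hdi'.2.2.2 hgcd' hle hle' hpole hpole' hα
  have h2j : 2 * j ≠ m := fun h2j => by
    have := hjcop.eq_one_of_dvd ⟨2, by omega⟩
    omega
  rcases three_coprime_cases h with
    h10 | h11 | h21 | ⟨h31, h32⟩ | ⟨h31, h41, h43⟩ | ⟨h32, h41, h43⟩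
  · exact cover 1 0 (by decide) (by simpa using h10) (by omega) (by omega)
  · exact cover 1 1 (by decide) (by simpa using h11) (by omega) (by omega)
  · exact cover 2 1 (by decide) h21 (by omega) (by omega)
  · by_cases hj : 3 * j + 3 ≤ 2 * m
    · exact cover 3 1 (by decide) h31 (by omega) (by omega)
    · exact cover 3 2 (by decide) h32 (by omega) (by omega)
  · rcases (by omega : 3 * j + 3 ≤ 2 * m ∨ 2 * j + 2 ≤ m ∨ m + 2 ≤ 2 * j ∨
        (m = 5 ∧ j = 3) ∨ (m = 7 ∧ j = 4)) with hj | hj | hj | ⟨rfl, rfl⟩ | ⟨rfl, rfl⟩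
    · exact cover 3 1 (by decide) h31 (by omega) (by omega)
    · exact cover 4 1 (by decide) h41 (by omega) (by omega)
    · exact cover 4 3 (by decide) h43 (by omega) (by omega)
    all_goals
      exact cover₂ 3 1 4 3 (by decide) (by decide) h31 h43
        (by norm_num) (by norm_num) (by norm_num) (by norm_num)
  · rcases (by omega : m + 3 ≤ 3 * j ∨ 2 * j + 2 ≤ m ∨ m + 2 ≤ 2 * j ∨
        (m = 5 ∧ j = 2) ∨ (m = 7 ∧ j = 3)) with hj | hj | hj | ⟨rfl, rfl⟩ | ⟨rfl, rfl⟩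
    · exact cover 3 2 (by decide) h32 (by omega) (by omega)
    · exact cover 4 1 (by decide) h41 (by omega) (by omega)
    · exact cover 4 3 (by decide) h43 (by omega) (by omega)
    all_goals
      exact cover₂ 4 1 3 2 (by decide) (by decide) h41 h32
        (by norm_num) (by norm_num) (by norm_num) (by norm_num)

end LocalCoordinates

lemma exists_le_four_den_eq_mul_of_mem_SSet {N : ℕ}
    (h : ∀ n, n ≤ N - 1 →
      3 ≤ (([n, n + 1, 2 * n + 1, 3 * n + 1, 3 * n + 2, 4 * n + 1, 4 * n + 3].filter
        (fun m => Nat.gcd N m = 1)).length))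
    {α : ℚ} (hα : α ∈ SSet N) : ∃ p ≤ 4, α.den = p * N := by
  obtain ⟨m, hm⟩ := hα.1.2.2
  have hden : α.den = m * N := by rw [hm, mul_comm]
  refine ⟨m, ?_, hden⟩
  by_contra! hm5
  obtain ⟨n, j, hnum, hn, hj0, hjm, hjcop⟩ := exists_num_eq_mul_add hα.1 hden (by omega)
  exact notMem_SSet_of_five_le hden hnum hn hm5 hj0 hjm hjcop (h n (by omega)) hα

lemma poleComplexity_SSet_eq_zero {N : ℕ}
    (h : ∀ n, n ≤ N - 1 →
      3 ≤ (([n, n + 1, 2 * n + 1, 3 * n + 1, 3 * n + 2, 4 * n + 1, 4 * n + 3].filter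
        (fun m => Nat.gcd N m = 1)).length))
    {α : ℚ} (hα : α ∈ SSet N) : poleComplexity (SSet N) α = 0 := by
  obtain ⟨p, hp, hαp⟩ := exists_le_four_den_eq_mul_of_mem_SSet h hα
  have hempty : {β ∈ SSet N | β ≠ α ∧ northPole α ∈ disk β} = ∅ := by
    refine Set.eq_empty_iff_forall_notMem.mpr fun β ⟨hβ, hne, hpole⟩ => ?_
    obtain ⟨q, -, hβq⟩ := exists_le_four_den_eq_mul_of_mem_SSet h hβ
    exact northPole_notMem_disk hα hβ.1 hne hαp hp hβq hpole
  rw [poleComplexity, hempty, Set.ncard_empty]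

theorem cN_eq_zero_of_three_coprime_general (N : ℕ)
    (h : ∀ n, n ≤ N - 1 →
      3 ≤ (([n, n + 1, 2 * n + 1, 3 * n + 1, 3 * n + 2, 4 * n + 1, 4 * n + 3].filter
        (fun m => Nat.gcd N m = 1)).length)) :
    cN N = 0 :=
  Nat.le_zero.mp <| csSup_le' <| by
    rintro _ ⟨α, hα, rfl⟩
    exact (poleComplexity_SSet_eq_zero h hα).le

/-- If for every `0 ≤ n ≤ N-1` at least three of `n`, `n+1`, `2n+1`, `3n+1`,
`3n+2`, `4n+1`, `4n+3` are coprime to `N`, then `c(N) = 0`. -/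
theorem cN_eq_zero_of_three_coprime (N : ℕ) (hN : 1 < N)
    (h : ∀ n, n ≤ N - 1 →
      3 ≤ (([n, n + 1, 2 * n + 1, 3 * n + 1, 3 * n + 2, 4 * n + 1, 4 * n + 3].filter
        (fun m => Nat.gcd N m = 1)).length)) :
    cN N = 0 :=
  cN_eq_zero_of_three_coprime_general N h

end

end Paper
end

section
/- Let (N,n) be a bad pair. Suppose that (a) each of 2n+1, 3n+2, 4n+3, 5n+3 has a common factor greater than 1 with N; and (b) gcd(N, 3n+1) = gcd(N, 5n+4) = 1. Then R_{N,n} = D_{(3n+1)/(3N)} ∪ D_{(5n+4)/(5N)}. In particular, c(N,n) = 0. -/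
/-!
Rescaling by `z ↦ N z - n` sends the disk of a candidate `α = (mn + t)/(mN)` to the disk
`D_{t/m}` of the reduced fraction `t/m ∈ [0, 1]`, and since `α` is in lowest terms,
`gcd(N, mn + t) = 1`. The hypotheses therefore rule out the positions `0, 1/2, 3/5, 2/3, 3/4, 1`,
while `1/3` and `4/5` do occur. A disk `D_{t/m}` with `1/3 ≤ t/m ≤ 4/5` lies in `D_{1/3} ∪ D_{4/5}`
as soon as its chord on the radical axis `x = 9/14` of the two circles lies inside their common
chord, i.e. `3m² - 9mt + 7t² ≥ 7`, and this inequality fails only at the excluded positions;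
disks further left or right lie in one of the two. Hence only `D_{1/3}` and `D_{4/5}` can be
essential, and neither of their north poles lies in the other disk.
-/

namespace Paper

noncomputable section

def rescale (N n : ℕ) (α : ℚ) : ℚ := N * α - n

lemma den_natCast_div {t m : ℕ} (hm : 0 < m) (htm : Nat.Coprime t m) : ((t : ℚ) / m).den = m := by
  have h := Rat.den_div_eq_of_coprime (a := t) (b := m) (by omega) (by simpa using htm)
  rw [Int.cast_natCast, Int.cast_natCast] at h
  omega

section Rescale

variable {N n : ℕ} {α : ℚ}

lemma den_eq_mul_den_rescale (hα : N ∣ α.den) : α.den = N * (rescale N n α).den := by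
  obtain ⟨k, hk⟩ := hα
  have hk0 : 0 < k := Nat.pos_of_ne_zero (by rintro rfl; simp_all)
  have hcop : Nat.Coprime α.num.natAbs k := α.reduced.coprime_dvd_right (hk ▸ dvd_mul_left k N)
  have hNα : (N : ℚ) * α = α.num / (k : ℤ) := by
    rw [eq_div_iff (by positivity), ← Rat.mul_den_eq_num, hk]; push_cast; ring
  have h := Rat.den_div_eq_of_coprime (a := α.num) (b := k) (by omega) (by simpa using hcop)
  rw [rescale, Rat.sub_natCast_den, hNα, hk]
  congr 1
  omega

lemma gcd_eq_one_of_rescale_eq {t m : ℕ} (hα : N ∣ α.den) (hm : 0 < m) (htm : Nat.Coprime t m)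
    (h : rescale N n α = t / m) : Nat.gcd N (m * n + t) = 1 := by
  have hden : α.den = N * m := by
    rw [den_eq_mul_den_rescale (n := n) hα, h, den_natCast_div hm htm]
  have hnum : α.num = m * n + t := by
    have : (α.num : ℚ) = m * n + t := by
      rw [← Rat.mul_den_eq_num, hden]
      rw [rescale] at h
      field_simp at h
      push_cast
      linear_combination h
    exact_mod_cast this
  have hred := α.reduced
  rw [hnum, hden] at hred
  exact Nat.Coprime.symm (Nat.Coprime.coprime_mul_right_right (by exact_mod_cast hred))

lemma rescale_ne_of_one_lt_gcd {t m : ℕ} (hα : N ∣ α.den) (hm : 0 < m)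
    (htm : Nat.Coprime t m) (h : 1 < Nat.gcd N (m * n + t)) : rescale N n α ≠ t / m :=
  fun heq => (gcd_eq_one_of_rescale_eq hα hm htm heq).not_gt h

lemma coprime_mul_add_mul {t m : ℕ} (htm : Nat.Coprime t m) (h : Nat.gcd N (m * n + t) = 1) :
    Nat.Coprime (m * n + t) (m * N) :=
  Nat.Coprime.mul_right ((Nat.coprime_mul_left_add_left t m n).2 htm) (Nat.coprime_comm.1 h)

lemma rescale_div_mul {t m : ℕ} (hN : 0 < N) (hm : 0 < m) :
    rescale N n (((m * n + t : ℕ) : ℚ) / (m * N : ℕ)) = t / m := by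
  have : (N : ℚ) ≠ 0 := by positivity
  have : (m : ℚ) ≠ 0 := by positivity
  rw [rescale]
  push_cast
  field_simp
  ring

lemma mem_candB_iff (hN : 0 < N) :
    α ∈ candB N n ↔ N ∣ α.den ∧ rescale N n α ∈ Set.Icc 0 1 := by
  have hN' : (0 : ℚ) < N := by exact_mod_cast hN
  simp only [candB, rescale, Set.mem_ofPred_eq, Set.mem_Icc, sub_nonneg, sub_le_iff_le_add,
    div_le_iff₀' hN', le_div_iff₀' hN']
  constructor
  · rintro ⟨h0, h1, hd⟩; exact ⟨hd, h0, by linarith⟩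
  · rintro ⟨hd, h0, h1⟩; exact ⟨h0, by linarith, hd⟩

lemma mem_disk_iff_rescale (hα : N ∣ α.den) (z : ℂ) :
    z ∈ disk α ↔ (N : ℂ) * z - n ∈ disk (rescale N n α) := by
  have hden := den_eq_mul_den_rescale (n := n) hα
  have hN : (0 : ℝ) < N := by
    rcases Nat.eq_zero_or_pos N with h | h
    · simp [h] at hden
    · exact_mod_cast h
  simp only [disk, Metric.mem_closedBall, dist_eq_norm]
  rw [show (N : ℂ) * z - n - ((rescale N n α : ℚ) : ℂ) = N * (z - α) by
      simp only [rescale]; push_cast; ring,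
    norm_mul, Complex.norm_natCast, hden]
  push_cast
  rw [← le_div_iff₀' hN]
  field_simp

lemma northPole_rescale (hα : N ∣ α.den) :
    (N : ℂ) * northPole α - n = northPole (rescale N n α) := by
  have hden := den_eq_mul_den_rescale (n := n) hα
  have hN : (N : ℂ) ≠ 0 := by
    rintro h; simp [Nat.cast_eq_zero.mp h] at hden
  simp only [northPole, rescale, hden]
  push_cast
  field_simp
  ring

end Rescale

lemma mem_closedBall_ofReal_iff {c r : ℝ} (hr : 0 ≤ r) (z : ℂ) :
    z ∈ Metric.closedBall (c : ℂ) r ↔ (z.re - c) ^ 2 + z.im ^ 2 ≤ r ^ 2 := by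
  rw [Metric.mem_closedBall, Complex.dist_eq_re_im, Real.sqrt_le_left hr]
  simp

lemma closedBall_subset_union_of_radical_axis {c₁ r₁ c₂ r₂ c r x₀ : ℝ} (hr₁ : 0 ≤ r₁)
    (hr₂ : 0 ≤ r₂) (hc₁ : c₁ ≤ c) (hc₂ : c ≤ c₂)
    (hx₀ : (x₀ - c₁) ^ 2 - r₁ ^ 2 = (x₀ - c₂) ^ 2 - r₂ ^ 2)
    (hr : r ^ 2 - (x₀ - c) ^ 2 ≤ r₁ ^ 2 - (x₀ - c₁) ^ 2) :
    Metric.closedBall (c : ℂ) r ⊆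
      Metric.closedBall (c₁ : ℂ) r₁ ∪ Metric.closedBall (c₂ : ℂ) r₂ := by
  intro z hz
  have hr0 : 0 ≤ r := dist_nonneg.trans hz
  rw [mem_closedBall_ofReal_iff hr0] at hz
  rcases le_total z.re x₀ with hx | hx
  · left
    rw [mem_closedBall_ofReal_iff hr₁]
    nlinarith [mul_nonneg (sub_nonneg.2 hc₁) (sub_nonneg.2 hx)]
  · right
    rw [mem_closedBall_ofReal_iff hr₂]
    nlinarith [mul_nonneg (sub_nonneg.2 hc₂) (sub_nonneg.2 hx)]

lemma closedBall_subset_third_union_four_fifths {t m : ℝ} (hm : 0 < m) (ht : 1 ≤ t)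
    (htm : t ≤ m - 1) (h : 7 ≤ 3 * m ^ 2 - 9 * m * t + 7 * t ^ 2) :
    Metric.closedBall ((t / m : ℝ) : ℂ) (1 / m) ⊆
      Metric.closedBall ((1 / 3 : ℝ) : ℂ) (1 / 3) ∪
        Metric.closedBall ((4 / 5 : ℝ) : ℂ) (1 / 5) := by
  have hdist (c₁ r₁ : ℝ) (hc : |t / m - c₁| ≤ r₁ - 1 / m) :
      Metric.closedBall ((t / m : ℝ) : ℂ) (1 / m) ⊆ Metric.closedBall (c₁ : ℂ) r₁ :=
    Metric.closedBall_subset_closedBall'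
      (by rw [Complex.isometry_ofReal.dist_eq, Real.dist_eq]; linarith)
  have hlow : 1 / m ≤ t / m := div_le_div_of_nonneg_right ht hm.le
  have hhigh : t / m ≤ 1 - 1 / m := by
    rw [le_sub_iff_add_le, ← add_div, div_le_one hm]; linarith
  rcases le_or_gt (t / m) (1 / 3) with h₁ | h₁
  · exact Set.subset_union_of_subset_left (hdist _ _ (by rw [abs_le]; constructor <;> linarith)) _
  rcases le_or_gt (4 / 5) (t / m) with h₂ | h₂
  · exact Set.subset_union_of_subset_right (hdist _ _ (by rw [abs_le]; constructor <;> linarith)) _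
  -- `x = 9/14` is the radical axis of the two target circles
  refine closedBall_subset_union_of_radical_axis (x₀ := 9 / 14) (by norm_num) (by norm_num)
    h₁.le h₂.le (by norm_num) ?_
  have e : (1 / m) ^ 2 - (9 / 14 - t / m) ^ 2 - ((1 / 3) ^ 2 - (9 / 14 - 1 / 3) ^ 2)
      = (7 - (3 * m ^ 2 - 9 * m * t + 7 * t ^ 2)) / (7 * m ^ 2) := by
    field_simp; ring
  have : (7 - (3 * m ^ 2 - 9 * m * t + 7 * t ^ 2)) / (7 * m ^ 2) ≤ 0 :=
    div_nonpos_of_nonpos_of_nonneg (by linarith) (by positivity)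
  linarith

lemma disk_eq_closedBall (β : ℚ) : disk β = Metric.closedBall ((β : ℝ) : ℂ) (1 / β.den) := by
  simp [disk]

/-- The positions `t/m ∈ [0, 1]` whose disks `D_{t/m}` are not covered by `D_{1/3} ∪ D_{4/5}`. -/
def exceptional : Set ℚ := {0, 1/2, 3/5, 2/3, 3/4, 1}

lemma div_mem_exceptional_of_lt_seven {t : ℤ} {m : ℕ} (hm : 0 < m)
    (h : 3 * m ^ 2 - 9 * m * t + 7 * t ^ 2 < 7) : (t : ℚ) / m ∈ exceptional := by
  have hm1 : (1 : ℤ) ≤ m := by exact_mod_cast hm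
  -- `4 (3m² - 9mt + 7t²) = 3 (2m - 3t)² + t²`
  have ht : 0 ≤ t ∧ t ≤ 5 := by constructor <;> nlinarith [sq_nonneg (2 * (m : ℤ) - 3 * t)]
  have hm9 : m ≤ 9 := by nlinarith [sq_nonneg (2 * (m : ℤ) - 3 * t)]
  obtain ⟨t, rfl⟩ := Int.eq_ofNat_of_zero_le ht.1
  have ht5 : t ≤ 5 := by omega
  interval_cases t <;> interval_cases m <;> revert h <;> norm_num [exceptional]

lemma disk_subset_disk_third_union_disk_four_fifths {β : ℚ} (hβ : β ∈ Set.Icc 0 1)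
    (hβE : β ∉ exceptional) : disk β ⊆ disk (1 / 3) ∪ disk (4 / 5) := by
  have hβt : ((β.num : ℚ) / β.den) = β := Rat.num_div_den β
  have ht : 0 < β.num :=
    Rat.num_pos.2 (lt_of_le_of_ne hβ.1 fun h => hβE (by simp [← h, exceptional]))
  have htm : β.num < β.den :=
    Rat.num_lt_denom_iff.2 (lt_of_le_of_ne hβ.2 fun h => hβE (by simp [h, exceptional]))
  have hQ : (7 : ℤ) ≤ 3 * β.den ^ 2 - 9 * β.den * β.num + 7 * β.num ^ 2 := by
    by_contra! hlt
    exact hβE (hβt ▸ div_mem_exceptional_of_lt_seven β.den_pos hlt)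
  have hcover := closedBall_subset_third_union_four_fifths (t := β.num) (m := β.den)
    (by exact_mod_cast β.den_pos) (by exact_mod_cast ht)
    (by exact_mod_cast (show β.num ≤ (β.den : ℤ) - 1 by omega)) (by exact_mod_cast hQ)
  have hden₁ : (1 / 3 : ℚ).den = 3 := by norm_num
  have hden₂ : (4 / 5 : ℚ).den = 5 := by norm_num
  have hβR : (β : ℝ) = β.num / β.den := by exact_mod_cast hβt.symm
  rw [disk_eq_closedBall, disk_eq_closedBall, disk_eq_closedBall, hden₁, hden₂, hβR]
  push_cast at hcover ⊢
  exact hcover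

lemma northPole_mem_disk_iff_s15 (q β : ℚ) :
    northPole q ∈ disk β ↔ ((q : ℝ) - β) ^ 2 + (1 / q.den) ^ 2 ≤ (1 / β.den) ^ 2 := by
  rw [disk_eq_closedBall, mem_closedBall_ofReal_iff (by positivity)]
  simp [northPole, Complex.div_re, Complex.div_im]

lemma northPole_third_not_mem_disk_four_fifths : northPole (1 / 3) ∉ disk (4 / 5) := by
  rw [northPole_mem_disk_iff_s15]; norm_num

lemma northPole_four_fifths_not_mem_disk_third : northPole (4 / 5) ∉ disk (1 / 3) := by
  rw [northPole_mem_disk_iff_s15]; norm_num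

section Rescale

variable {N n : ℕ} {α : ℚ}

lemma rescale_not_mem_exceptional (hα : N ∣ α.den) (hg : 1 < Nat.gcd N n)
    (hbad : 1 < Nat.gcd N (n + 1)) (h2 : 1 < Nat.gcd N (2 * n + 1))
    (h32 : 1 < Nat.gcd N (3 * n + 2)) (h43 : 1 < Nat.gcd N (4 * n + 3))
    (h53 : 1 < Nat.gcd N (5 * n + 3)) : rescale N n α ∉ exceptional := by
  simp only [exceptional, Set.mem_insert_iff, Set.mem_singleton_iff, not_or]
  refine ⟨?_, ?_, ?_, ?_, ?_, ?_⟩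
  · simpa using rescale_ne_of_one_lt_gcd (t := 0) hα one_pos (by norm_num) (by simpa using hg)
  · simpa using rescale_ne_of_one_lt_gcd (t := 1) hα two_pos (by norm_num) h2
  · simpa using rescale_ne_of_one_lt_gcd (t := 3) (m := 5) hα (by norm_num) (by norm_num) h53
  · simpa using rescale_ne_of_one_lt_gcd (t := 2) (m := 3) hα (by norm_num) (by norm_num) h32
  · simpa using rescale_ne_of_one_lt_gcd (t := 3) (m := 4) hα (by norm_num) (by norm_num) h43
  · simpa using rescale_ne_of_one_lt_gcd (t := 1) hα one_pos (by norm_num) (by simpa using hbad)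

lemma disk_subset_union_of_rescale {α₁ α₂ : ℚ} (hα : N ∣ α.den)
    (hI : rescale N n α ∈ Set.Icc 0 1) (hE : rescale N n α ∉ exceptional)
    (hd₁ : N ∣ α₁.den) (hβ₁ : rescale N n α₁ = 1 / 3)
    (hd₂ : N ∣ α₂.den) (hβ₂ : rescale N n α₂ = 4 / 5) : disk α ⊆ disk α₁ ∪ disk α₂ := by
  intro z hz
  rw [mem_disk_iff_rescale hα] at hz
  rw [Set.mem_union, mem_disk_iff_rescale hd₁, mem_disk_iff_rescale hd₂, hβ₁, hβ₂]
  exact disk_subset_disk_third_union_disk_four_fifths hI hE hz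

end Rescale

lemma diskAt_eq_disk {a b : ℕ} (hb : 0 < b) (hab : Nat.Coprime a b) :
    diskAt a b = disk (a / b) := by
  simp [disk, diskAt, den_natCast_div hb hab]

lemma sSup_poleComplexity_eq_zero {S : Set ℚ}
    (h : ∀ α ∈ S, ∀ β ∈ S, β ≠ α → northPole α ∉ disk β) : sSup (poleComplexity S '' S) = 0 := by
  refine Nat.le_zero.1 (csSup_le' ?_)
  rintro _ ⟨α, hα, rfl⟩
  have hempty : {β ∈ S | β ≠ α ∧ northPole α ∈ disk β} = ∅ :=
    Set.eq_empty_of_forall_notMem fun β hβ => h α hα β hβ.1 hβ.2.1 hβ.2.2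
  rw [poleComplexity, hempty, Set.ncard_empty]

section PairCover

variable {N n : ℕ} {α₁ α₂ : ℚ}

lemma RB_eq_union (h₁ : α₁ ∈ candB N n) (h₂ : α₂ ∈ candB N n)
    (hcover : ∀ α ∈ candB N n, disk α ⊆ disk α₁ ∪ disk α₂) : RB N n = disk α₁ ∪ disk α₂ :=
  (Set.iUnion₂_subset hcover).antisymm
    (Set.union_subset (Set.subset_biUnion_of_mem h₁) (Set.subset_biUnion_of_mem h₂))

lemma SB_subset_pair (h₁ : α₁ ∈ candB N n) (h₂ : α₂ ∈ candB N n)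
    (hcover : ∀ α ∈ candB N n, disk α ⊆ disk α₁ ∪ disk α₂) : SB N n ⊆ {α₁, α₂} := by
  rintro α ⟨hα, hnot⟩
  by_contra hne
  simp only [Set.mem_insert_iff, Set.mem_singleton_iff, not_or] at hne
  exact hnot ((hcover α hα).trans (Set.union_subset
    (Set.subset_biUnion_of_mem (u := disk) ⟨h₁, Ne.symm hne.1⟩)
    (Set.subset_biUnion_of_mem (u := disk) ⟨h₂, Ne.symm hne.2⟩)))

lemma cB_eq_zero_of_SB_subset_pair (hS : SB N n ⊆ {α₁, α₂})
    (h₁₂ : northPole α₁ ∉ disk α₂) (h₂₁ : northPole α₂ ∉ disk α₁) : cB N n = 0 := by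
  refine sSup_poleComplexity_eq_zero fun α hα β hβ hne => ?_
  rcases hS hα with rfl | rfl <;> rcases hS hβ with rfl | rfl <;>
    first | exact absurd rfl hne | assumption

end PairCover

theorem bad_region_three_five_general (N n : ℕ) (hN : 1 < N)
    (hg : 1 < Nat.gcd N n) (hbad : 1 < Nat.gcd N (n + 1))
    (h2 : 1 < Nat.gcd N (2 * n + 1)) (h32 : 1 < Nat.gcd N (3 * n + 2))
    (h43 : 1 < Nat.gcd N (4 * n + 3)) (h53 : 1 < Nat.gcd N (5 * n + 3))
    (h31 : Nat.gcd N (3 * n + 1) = 1) (h54 : Nat.gcd N (5 * n + 4) = 1) :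
    RB N n = diskAt (3 * n + 1) (3 * N) ∪ diskAt (5 * n + 4) (5 * N) ∧ cB N n = 0 := by
  have hN0 : 0 < N := by omega
  have hcop₁ := coprime_mul_add_mul (t := 1) (m := 3) (by norm_num) h31
  have hcop₂ := coprime_mul_add_mul (t := 4) (m := 5) (by norm_num) h54
  set α₁ : ℚ := ((3 * n + 1 : ℕ) : ℚ) / (3 * N : ℕ)
  set α₂ : ℚ := ((5 * n + 4 : ℕ) : ℚ) / (5 * N : ℕ)
  have hd₁ : N ∣ α₁.den := den_natCast_div (by omega) hcop₁ ▸ dvd_mul_left N 3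
  have hd₂ : N ∣ α₂.den := den_natCast_div (by omega) hcop₂ ▸ dvd_mul_left N 5
  have hβ₁ : rescale N n α₁ = 1 / 3 := (rescale_div_mul (t := 1) hN0 three_pos).trans (by norm_num)
  have hβ₂ : rescale N n α₂ = 4 / 5 :=
    (rescale_div_mul (t := 4) (m := 5) hN0 (by norm_num)).trans (by norm_num)
  have hmem₁ : α₁ ∈ candB N n := (mem_candB_iff hN0).2 ⟨hd₁, by rw [hβ₁]; norm_num⟩
  have hmem₂ : α₂ ∈ candB N n := (mem_candB_iff hN0).2 ⟨hd₂, by rw [hβ₂]; norm_num⟩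
  have hcover : ∀ α ∈ candB N n, disk α ⊆ disk α₁ ∪ disk α₂ := fun α hα =>
    have ⟨hd, hI⟩ := (mem_candB_iff hN0).1 hα
    disk_subset_union_of_rescale hd hI
      (rescale_not_mem_exceptional hd hg hbad h2 h32 h43 h53) hd₁ hβ₁ hd₂ hβ₂
  refine ⟨?_, cB_eq_zero_of_SB_subset_pair (SB_subset_pair hmem₁ hmem₂ hcover) ?_ ?_⟩
  · rw [RB_eq_union hmem₁ hmem₂ hcover, diskAt_eq_disk (by omega) hcop₁,
      diskAt_eq_disk (by omega) hcop₂]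
  · rw [mem_disk_iff_rescale hd₂, northPole_rescale hd₁, hβ₁, hβ₂]
    exact northPole_third_not_mem_disk_four_fifths
  · rw [mem_disk_iff_rescale hd₁, northPole_rescale hd₂, hβ₁, hβ₂]
    exact northPole_four_fifths_not_mem_disk_third

/-- For a bad pair `(N,n)` such that each of `2n+1`, `3n+2`, `4n+3`, `5n+3` has a
common factor `> 1` with `N` while `gcd(N,3n+1) = gcd(N,5n+4) = 1`, the region
`R_{N,n}` is the union of the two disks `D_{(3n+1)/(3N)}` and `D_{(5n+4)/(5N)}`.
In particular `c(N,n) = 0`. -/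
theorem bad_region_three_five (N n : ℕ) (hN : 1 < N) (hn : n ≤ N - 1)
    (hg : 1 < Nat.gcd N n) (hbad : 1 < Nat.gcd N (n + 1))
    (h2 : 1 < Nat.gcd N (2 * n + 1)) (h32 : 1 < Nat.gcd N (3 * n + 2))
    (h43 : 1 < Nat.gcd N (4 * n + 3)) (h53 : 1 < Nat.gcd N (5 * n + 3))
    (h31 : Nat.gcd N (3 * n + 1) = 1) (h54 : Nat.gcd N (5 * n + 4) = 1) :
    RB N n = diskAt (3 * n + 1) (3 * N) ∪ diskAt (5 * n + 4) (5 * N) ∧ cB N n = 0 :=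
  bad_region_three_five_general N n hN hg hbad h2 h32 h43 h53 h31 h54

end

end Paper
end
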